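/- Let r ∈ ℚ_{>0} be such that S_r is atomic (i.e., r = 1 or n(r) > 1). Then the following are equivalent: (1) r ∈ ℕ; (2) ω(S_r) = sup { ω(a) : a an atom of S_r } < ∞; (3) S_r is globally tame, i.e., sup { t(a) : a an atom of S_r } < ∞; (4) S_r is locally tame, i.e., t(a) < ∞ for every atom a of S_r. -/

import Mathlib

open Finsupp
open scoped ENNReal

/-- The Puiseux monoid (rational cyclic semiring) `S_r`, the additive submonoid of `ℚ`
generated by the nonnegative powers of `r`. -/
def S (r : ℚ) : AddSubmonoid ℚ := AddSubmonoid.closure {x : ℚ | ∃ n : ℕ, x = r ^ n}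

/-- A factorization of `x` over the powers of `r`: a finitely supported choice of
coefficients `α i` with `∑ α i * r ^ i = x`. -/
def IsFactorization (r x : ℚ) (α : ℕ →₀ ℕ) : Prop :=
  (α.sum fun i c => (c : ℚ) * r ^ i) = x

/-- The length of a factorization. -/
def flen (α : ℕ →₀ ℕ) : ℕ := α.sum fun _ c => c

/-- The set of lengths of factorizations of `x` over the powers of `r`. -/
def lengthSet (r x : ℚ) : Set ℕ :=
  {t | ∃ α : ℕ →₀ ℕ, IsFactorization r x α ∧ flen α = t}

/-- An atom of `S_r`: a nonzero element that is not the sum of two nonzero elements. -/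
def IsAtomS (r a : ℚ) : Prop :=
  a ∈ S r ∧ a ≠ 0 ∧ ¬ ∃ y z : ℚ, y ∈ S r ∧ z ∈ S r ∧ y ≠ 0 ∧ z ≠ 0 ∧ a = y + z

/-- The set of lengths of `x` as sums of atoms of `S_r`. -/
def atomLengthSet (r x : ℚ) : Set ℕ :=
  {t | ∃ f : Fin t → ℚ, (∀ i, IsAtomS r (f i)) ∧ ∑ i, f i = x}

/-- `x` divides `y` in `S_r`. -/
def DvdS (r x y : ℚ) : Prop := y - x ∈ S r

/-- `n` bounds the omega-primality of `x` in `S_r`. -/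
def OmegaBound (r x : ℚ) (n : ℕ) : Prop :=
  ∀ (t : ℕ) (a : Fin t → ℚ), (∀ i, IsAtomS r (a i)) → DvdS r x (∑ i, a i) →
    ∃ T : Finset (Fin t), T.card ≤ n ∧ DvdS r x (∑ i ∈ T, a i)

/-- The omega invariant of `x` in `S_r`. -/
noncomputable def omegaS (r x : ℚ) : ℕ∞ :=
  sInf {N : ℕ∞ | ∃ n : ℕ, N = n ∧ OmegaBound r x n}

/-- A factorization of `x` into a multiset of atoms of `S_r`. -/
def IsMFactorization (r x : ℚ) (z : Multiset ℚ) : Prop :=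
  (∀ a ∈ z, IsAtomS r a) ∧ z.sum = x

/-- The distance between two multiset factorizations. -/
def mdist (z z' : Multiset ℚ) : ℕ :=
  max (Multiset.card z - Multiset.card (z ∩ z'))
      (Multiset.card z' - Multiset.card (z ∩ z'))

/-- `n` bounds the local tame degree of the atom `a` in `S_r`. -/
def TameBound (r a : ℚ) (n : ℕ) : Prop :=
  ∀ x : ℚ, x ∈ S r → x - a ∈ S r →
    ∀ z : Multiset ℚ, IsMFactorization r x z →
      ∃ z' : Multiset ℚ, IsMFactorization r x z' ∧ a ∈ z' ∧ mdist z z' ≤ n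

/-- The local tame degree of the atom `a` in `S_r`. -/
noncomputable def tameS (r a : ℚ) : ℕ∞ :=
  sInf {N : ℕ∞ | ∃ n : ℕ, N = n ∧ TameBound r a n}

/-!
If `r = m` is a natural number then `S_r = ℕ`, whose only atom is `1`; hence `ω(1) ≤ 1` and
`t(1) = 0`. Otherwise `r = n / d` in lowest terms with `n, d > 1`, and clearing denominators shows
that every power `r ^ k` is an atom. The identity `d ^ k • r ^ k = n ^ k` then defeats all three
finiteness conditions. For `r < 1`, the atom `1` divides the sum of `d ^ k` copies of the tiny atom
`r ^ k`, while boundedly many of them sum to less than `1`; for `r > 1`, the atom `r ^ K` divides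
the sum of `n ^ K` copies of `1`. For the tame degree of `1`, compare a factorization of `n ^ k`
containing `1` with `d ^ k • r ^ k`: if `r < 1` it must keep so many copies of `r ^ k` that its sum
exceeds `n ^ k`, and if `r > 1` a carry argument in base `n / d` shows that it has at least `k`
atoms smaller than `r ^ k`.
-/

section Basic

variable {r x : ℚ}

lemma pow_mem_S (r : ℚ) (i : ℕ) : r ^ i ∈ S r :=
  AddSubmonoid.subset_closure ⟨i, rfl⟩

lemma natCast_mem_S (r : ℚ) (m : ℕ) : (m : ℚ) ∈ S r := by
  simpa using nsmul_mem (pow_mem_S r 0) m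

lemma mem_S_iff : x ∈ S r ↔ ∃ E : Multiset ℕ, (E.map (r ^ ·)).sum = x := by
  refine ⟨fun hx => ?_, ?_⟩
  · induction hx using AddSubmonoid.closure_induction with
    | mem x hx => obtain ⟨i, rfl⟩ := hx; exact ⟨{i}, by simp⟩
    | zero => exact ⟨0, by simp⟩
    | add x y _ _ hx hy =>
      obtain ⟨E, rfl⟩ := hx
      obtain ⟨F, rfl⟩ := hy
      exact ⟨E + F, by simp⟩
  · rintro ⟨E, rfl⟩
    refine multiset_sum_mem _ fun y hy => ?_
    obtain ⟨i, -, rfl⟩ := Multiset.mem_map.1 hy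
    exact pow_mem_S r i

lemma nonneg_of_mem_S (h0 : 0 < r) (hx : x ∈ S r) : 0 ≤ x := by
  obtain ⟨E, rfl⟩ := mem_S_iff.1 hx
  exact Multiset.sum_nonneg fun y hy => by
    obtain ⟨i, -, rfl⟩ := Multiset.mem_map.1 hy
    positivity

lemma IsAtomS.exists_eq_pow (h0 : 0 < r) (ha : IsAtomS r x) : ∃ e : ℕ, x = r ^ e := by
  obtain ⟨hmem, hne, hsplit⟩ := ha
  obtain ⟨E, rfl⟩ := mem_S_iff.1 hmem
  induction E using Multiset.induction with
  | empty => simp at hne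
  | cons e F _ =>
    refine ⟨e, ?_⟩
    by_contra h
    have hF : (F.map (r ^ ·)).sum ≠ 0 := fun hF => h (by simp [hF])
    exact hsplit ⟨r ^ e, _, pow_mem_S r e, mem_S_iff.2 ⟨F, rfl⟩, by positivity, hF, by simp⟩

lemma exists_map_pow_eq (h0 : 0 < r) {z : Multiset ℚ} (hz : ∀ a ∈ z, IsAtomS r a) :
    ∃ E : Multiset ℕ, E.map (r ^ ·) = z := by
  induction z using Multiset.induction with
  | empty => exact ⟨0, rfl⟩
  | cons a z ih =>
    obtain ⟨e, rfl⟩ := (hz a (Multiset.mem_cons_self a z)).exists_eq_pow h0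
    obtain ⟨E, rfl⟩ := ih fun b hb => hz b (Multiset.mem_cons_of_mem hb)
    exact ⟨e ::ₘ E, Multiset.map_cons _ _ _⟩

lemma OmegaBound.mono {n m : ℕ} (h : OmegaBound r x n) (hnm : n ≤ m) : OmegaBound r x m :=
  fun t a ha hdvd => (h t a ha hdvd).imp fun _ hT => ⟨hT.1.trans hnm, hT.2⟩

lemma not_omegaBound_of_dvd (h0 : 0 < r) {b : ℚ} (hb : IsAtomS r b) {t N : ℕ}
    (hdvd : DvdS r x (t * b)) (hlt : N * b < x) : ¬ OmegaBound r x N := by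
  intro h
  obtain ⟨T, hT, hTa⟩ := h t (fun _ => b) (fun _ => hb) (by simpa using hdvd)
  have hTa' : 0 ≤ T.card * b - x := by simpa [DvdS] using nonneg_of_mem_S h0 hTa
  have hT' : (T.card : ℚ) ≤ N := by exact_mod_cast hT
  nlinarith [nonneg_of_mem_S h0 hb.1]

lemma exists_le_of_sInf_le {P : ℕ → Prop} {m : ℕ}
    (h : sInf {N : ℕ∞ | ∃ n : ℕ, N = n ∧ P n} ≤ m) : ∃ n ≤ m, P n := by
  obtain ⟨_, ⟨n, rfl, hn⟩, hlt⟩ :=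
    sInf_lt_iff.1 (h.trans_lt (ENat.natCast_lt_natCast.2 m.lt_succ_self))
  exact ⟨n, Nat.lt_succ_iff.1 (ENat.natCast_lt_natCast.1 hlt), hn⟩

end Basic

section Natural

variable {m : ℕ} {x : ℚ}

lemma exists_natCast_of_mem_S_natCast (hx : x ∈ S (m : ℚ)) : ∃ k : ℕ, x = k := by
  induction hx using AddSubmonoid.closure_induction with
  | mem x hx => obtain ⟨i, rfl⟩ := hx; exact ⟨m ^ i, by push_cast; rfl⟩
  | zero => exact ⟨0, by simp⟩
  | add x y _ _ hx hy =>
    obtain ⟨k, rfl⟩ := hx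
    obtain ⟨l, rfl⟩ := hy
    exact ⟨k + l, by push_cast; rfl⟩

lemma IsAtomS.eq_one_of_natCast (ha : IsAtomS (m : ℚ) x) : x = 1 := by
  obtain ⟨hmem, hne, hsplit⟩ := ha
  obtain ⟨k, rfl⟩ := exists_natCast_of_mem_S_natCast hmem
  obtain ⟨k, rfl⟩ : ∃ l, k = l + 1 :=
    Nat.exists_eq_add_one.2 (Nat.pos_of_ne_zero (by exact_mod_cast hne))
  by_contra hk
  refine hsplit ⟨1, k, by simpa using natCast_mem_S _ 1, natCast_mem_S _ k, one_ne_zero,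
    ?_, by push_cast; ring⟩
  rintro hk0
  simp [hk0] at hk

lemma omegaS_one_natCast_le_one : omegaS (m : ℚ) 1 ≤ 1 := by
  refine sInf_le ⟨1, by simp, fun t a ha hdvd => ?_⟩
  have hsum : ∑ i, a i = t := by simp [fun i => (ha i).eq_one_of_natCast]
  obtain ⟨k, hk⟩ := exists_natCast_of_mem_S_natCast (hsum ▸ hdvd : DvdS m 1 t)
  have ht : 0 < t := by
    rw [← Nat.cast_pos (α := ℚ)]
    linarith [(Nat.cast_nonneg k : (0 : ℚ) ≤ k)]
  refine ⟨{⟨0, ht⟩}, by simp, ?_⟩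
  simp [DvdS, (ha _).eq_one_of_natCast]

lemma tameS_one_natCast_eq_zero : tameS (m : ℚ) 1 = 0 := by
  have hself : ∀ z : Multiset ℚ, mdist z z = 0 := fun z => by
    simp [mdist, ← Multiset.inf_eq_inter]
  refine le_antisymm (sInf_le ⟨0, by simp, fun x _ hx1 z hz => ⟨z, hz, ?_, (hself z).le⟩⟩) bot_le
  obtain ⟨k, hk⟩ := exists_natCast_of_mem_S_natCast hx1
  have hz0 : z ≠ 0 := by
    rintro rfl
    have := hz.2
    simp only [Multiset.sum_zero] at this
    linarith [(Nat.cast_nonneg k : (0 : ℚ) ≤ k)]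
  obtain ⟨a, ha⟩ := Multiset.exists_mem_of_ne_zero hz0
  exact (hz.1 a ha).eq_one_of_natCast ▸ ha

end Natural

lemma Multiset.sum_map_eq_sum_range_count {M : Type*} [AddCommMonoid M] {E : Multiset ℕ}
    {K : ℕ} (hE : ∀ e ∈ E, e < K) (f : ℕ → M) :
    (E.map f).sum = ∑ i ∈ Finset.range K, E.count i • f i := by
  rw [Finset.sum_multiset_map_count]
  refine Finset.sum_subset (fun e he => Finset.mem_range.2 (hE e (Multiset.mem_toFinset.1 he)))
    fun i _ hi => ?_
  simp [Multiset.count_eq_zero.2 (by simpa using hi)]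

lemma count_nsmul_add_le_sum {α : Type*} [AddCommMonoid α] [PartialOrder α]
    [IsOrderedAddMonoid α] [DecidableEq α] {s : Multiset α} (hs : ∀ x ∈ s, 0 ≤ x) {a b : α}
    (ha : a ∈ s) (hab : a ≠ b) : s.count b • b + a ≤ s.sum := by
  calc s.count b • b + a ≤ (s.filter (· = b)).sum + (s.filter (· ≠ b)).sum := by
        rw [Multiset.filter_eq', Multiset.sum_replicate]
        gcongr
        exact Multiset.single_le_sum (fun x hx => hs x (Multiset.mem_of_mem_filter hx)) a
          (Multiset.mem_filter.2 ⟨ha, hab⟩)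
    _ = s.sum := by rw [← Multiset.sum_add, Multiset.filter_add_not]

lemma mdist_replicate_le {m N : ℕ} {b : ℚ} {z : Multiset ℚ}
    (h : mdist (Multiset.replicate m b) z ≤ N) :
    m ≤ z.count b + N ∧ Multiset.card z ≤ z.count b + N := by
  simp only [mdist, Multiset.replicate_inter, Multiset.card_replicate, max_le_iff] at h
  omega

open Finset in
lemma add_one_le_sum_range_of_dvd {n d : ℕ} (hd : 0 < d) (hdn : d < n) (hcop : n.Coprime d)
    (k : ℕ) (c : ℕ → ℕ) (hc0 : 1 ≤ c 0)
    (hdvd : n ^ (k + 1) ∣ ∑ i ∈ range (k + 1), c i * n ^ i * d ^ (k - i)) :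
    k + 1 ≤ ∑ i ∈ range (k + 1), c i := by
  induction k generalizing c with
  | zero => simpa using hc0
  | succ k ih =>
    rw [sum_range_succ'] at hdvd ⊢
    simp only [Nat.add_sub_add_right, pow_zero, mul_one, Nat.sub_zero] at hdvd
    have htail : n ∣ ∑ i ∈ range (k + 1), c (i + 1) * n ^ (i + 1) * d ^ (k - i) :=
      dvd_sum fun i _ => ((dvd_pow_self n i.succ_ne_zero).mul_left _).mul_right _
    obtain ⟨t, ht⟩ : n ∣ c 0 :=
      (hcop.pow_right _).dvd_of_dvd_mul_right <|
        (Nat.dvd_add_right htail).1 ((dvd_pow_self n (by omega)).trans hdvd)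
    have ht0 : 1 ≤ t := Nat.pos_of_ne_zero fun h => by simp [h] at ht; omega
    -- carry the `n * t` copies of exponent `0` as `d * t` copies of exponent `1`
    set c' : ℕ → ℕ := fun i => c (i + 1) + if i = 0 then d * t else 0
    have hsum' : ∑ i ∈ range (k + 1), c' i = ∑ i ∈ range (k + 1), c (i + 1) + d * t := by
      simp [c', sum_add_distrib]
    have hcarry : ∑ i ∈ range (k + 1), c (i + 1) * n ^ (i + 1) * d ^ (k - i) + c 0 * d ^ (k + 1)
        = n * ∑ i ∈ range (k + 1), c' i * n ^ i * d ^ (k - i) := by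
      simp only [c', add_mul, ite_mul, zero_mul, sum_add_distrib, Finset.sum_ite_eq', mem_range,
        Nat.zero_lt_succ, if_true, Nat.sub_zero, mul_add, Finset.mul_sum, ht]
      congr 1
      · exact sum_congr rfl fun i _ => by ring
      · ring
    have := ih c' (by simp [c']; nlinarith) (Nat.dvd_of_mul_dvd_mul_left (by omega : 0 < n)
      (by rw [← pow_succ', ← hcarry]; exact hdvd))
    rw [hsum'] at this
    rw [ht]
    nlinarith

lemma exists_succ_mul_pow_lt_one {r : ℚ} (hr1 : r < 1) (N : ℕ) :
    ∃ k : ℕ, (N + 1) * r ^ k < 1 := by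
  obtain ⟨k, hk⟩ := exists_pow_lt_of_lt_one (show (0 : ℚ) < 1 / (N + 1) by positivity) hr1
  exact ⟨k, by rwa [lt_div_iff₀ (by positivity), mul_comm] at hk⟩

section NonNatural

variable {r : ℚ} {n d : ℕ}

lemma ne_one_of_mul_eq (hr : r * d = n) (hcop : n.Coprime d) (hn : 1 < n) : r ≠ 1 := by
  rintro rfl
  have : d = n := by exact_mod_cast (one_mul (d : ℚ)).symm.trans hr
  subst this
  exact hn.ne' ((Nat.coprime_self _).1 hcop)

lemma pow_mul_pow_eq (hr : r * d = n) {e M : ℕ} (he : e ≤ M) :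
    r ^ e * (d : ℚ) ^ M = ((n ^ e * d ^ (M - e) : ℕ) : ℚ) := by
  calc r ^ e * (d : ℚ) ^ M = (r * d) ^ e * (d : ℚ) ^ (M - e) := by
        rw [mul_pow, mul_assoc, ← pow_add, Nat.add_sub_cancel' he]
    _ = _ := by rw [hr]; push_cast; rfl

lemma sum_map_pow_mul_pow (hr : r * d = n) {E : Multiset ℕ} {M : ℕ} (hE : ∀ e ∈ E, e ≤ M) :
    (E.map (r ^ ·)).sum * (d : ℚ) ^ M =
      (((E.map fun e => n ^ e * d ^ (M - e)).sum : ℕ) : ℚ) := by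
  rw [← Multiset.sum_map_mul_right, Nat.cast_multiset_sum, Multiset.map_map]
  exact congrArg Multiset.sum (Multiset.map_congr rfl fun e he => pow_mul_pow_eq hr (hE e he))

lemma sum_map_pow_ne_pow_of_lt (hr : r * d = n) (hcop : n.Coprime d) (hn : 1 < n)
    {E : Multiset ℕ} {k : ℕ} (hE : ∀ e ∈ E, k < e) : (E.map (r ^ ·)).sum ≠ r ^ k := by
  intro h
  have hM : ∀ e ∈ E, e ≤ k + E.sum := fun e he => (Multiset.le_sum_of_mem he).trans (by omega)
  have hclear :
      (E.map fun e => n ^ e * d ^ (k + E.sum - e)).sum = n ^ k * d ^ (k + E.sum - k) := by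
    exact_mod_cast (sum_map_pow_mul_pow hr hM).symm.trans (h ▸ pow_mul_pow_eq hr (by omega))
  have hdvd : n ^ k * n ∣ n ^ k * d ^ (k + E.sum - k) :=
    hclear ▸ Multiset.dvd_sum fun x hx => by
      obtain ⟨e, he, rfl⟩ := Multiset.mem_map.1 hx
      exact ((pow_succ n k) ▸ pow_dvd_pow n (hE e he)).mul_right _
  exact hn.ne' ((hcop.pow_right _).eq_one_of_dvd
    (Nat.dvd_of_mul_dvd_mul_left (by positivity) hdvd))

lemma sum_map_pow_ne_pow_of_gt (hr : r * d = n) (hcop : n.Coprime d) (hd : 1 < d)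
    {E : Multiset ℕ} {k : ℕ} (hE : ∀ e ∈ E, e < k) : (E.map (r ^ ·)).sum ≠ r ^ k := by
  intro h
  have hclear : (E.map fun e => n ^ e * d ^ (k - e)).sum = n ^ k := by
    have := (sum_map_pow_mul_pow hr fun e he => (hE e he).le).symm.trans
      (h ▸ pow_mul_pow_eq hr le_rfl)
    simpa using Nat.cast_injective this
  have hdvd : d ∣ n ^ k := hclear ▸ Multiset.dvd_sum fun x hx => by
    obtain ⟨e, he, rfl⟩ := Multiset.mem_map.1 hx
    exact (dvd_pow_self d (Nat.sub_ne_zero_of_lt (hE e he))).mul_left _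
  exact hd.ne' ((hcop.symm.pow_right k).eq_one_of_dvd hdvd)

lemma isAtomS_pow (h0 : 0 < r) (hr : r * d = n) (hcop : n.Coprime d) (hn : 1 < n) (hd : 1 < d)
    (k : ℕ) : IsAtomS r (r ^ k) := by
  refine ⟨pow_mem_S r k, by positivity, ?_⟩
  rintro ⟨y, z, hy, hz, hy0, hz0, hyz⟩
  have hpos : ∀ {x}, x ∈ S r → x ≠ 0 → 0 < x := fun hx hx0 =>
    (nonneg_of_mem_S h0 hx).lt_of_ne' hx0
  obtain ⟨Ey, rfl⟩ := mem_S_iff.1 hy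
  obtain ⟨Ez, rfl⟩ := mem_S_iff.1 hz
  have hle : ∀ {E : Multiset ℕ}, ∀ e ∈ E, r ^ e ≤ (E.map (r ^ ·)).sum := fun e he =>
    Multiset.single_le_sum
      (fun x hx => by obtain ⟨i, -, rfl⟩ := Multiset.mem_map.1 hx; positivity) _
      (Multiset.mem_map_of_mem _ he)
  have hlt : ∀ e ∈ Ey + Ez, r ^ e < r ^ k := by
    intro e he
    rcases Multiset.mem_add.1 he with he | he
    · linarith [hle e he, hpos hz hz0]
    · linarith [hle e he, hpos hy hy0]
  have hsum : ((Ey + Ez).map (r ^ ·)).sum = r ^ k := by simp [hyz]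
  rcases (ne_one_of_mul_eq hr hcop hn).lt_or_gt with hr1 | hr1
  · exact sum_map_pow_ne_pow_of_lt hr hcop hn
      (fun e he => (pow_lt_pow_iff_right_of_lt_one₀ h0 hr1).1 (hlt e he)) hsum
  · exact sum_map_pow_ne_pow_of_gt hr hcop hd
      (fun e he => (pow_lt_pow_iff_right₀ hr1).1 (hlt e he)) hsum

lemma exists_not_omegaBound (h0 : 0 < r) (hr : r * d = n) (hcop : n.Coprime d) (hn : 1 < n)
    (hd : 1 < d) (N : ℕ) : ∃ a, IsAtomS r a ∧ ¬ OmegaBound r a N := by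
  have hatom := isAtomS_pow h0 hr hcop hn hd
  have hpow : ∀ k, (d : ℚ) ^ k * r ^ k = (n : ℚ) ^ k := fun k => by
    rw [← mul_pow, mul_comm, hr]
  rcases (ne_one_of_mul_eq hr hcop hn).lt_or_gt with hr1 | hr1
  · obtain ⟨k, hk⟩ := exists_succ_mul_pow_lt_one hr1 N
    refine ⟨1, by simpa using hatom 0, not_omegaBound_of_dvd h0 (hatom k) (t := d ^ k) ?_ ?_⟩
    · have : 1 ≤ n ^ k := Nat.one_le_pow _ _ (by omega)
      simpa [DvdS, hpow, Nat.cast_sub this] using natCast_mem_S r (n ^ k - 1)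
    · nlinarith [pow_pos h0 k]
  · obtain ⟨K, hK⟩ := pow_unbounded_of_one_lt (N : ℚ) hr1
    refine ⟨r ^ K, hatom K, not_omegaBound_of_dvd h0 (b := 1) (by simpa using hatom 0)
      (t := n ^ K) ?_ (by simpa using hK)⟩
    have : 1 ≤ d ^ K := Nat.one_le_pow _ _ (by omega)
    have hmem := nsmul_mem (pow_mem_S r K) (d ^ K - 1)
    rw [nsmul_eq_mul, Nat.cast_sub this] at hmem
    simp only [DvdS, Nat.cast_pow, mul_one, ← hpow]
    convert hmem using 1
    push_cast
    ring

lemma TameBound.exists_near_replicate (h0 : 0 < r) (hr : r * d = n) (hcop : n.Coprime d)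
    (hn : 1 < n) (hd : 1 < d) {N : ℕ} (h : TameBound r 1 N) (k : ℕ) :
    ∃ z, IsMFactorization r ((n : ℚ) ^ k) z ∧ 1 ∈ z ∧
      d ^ k ≤ z.count (r ^ k) + N ∧ Multiset.card z ≤ z.count (r ^ k) + N := by
  have hx : ((n : ℚ) ^ k) ∈ S r := by simpa using natCast_mem_S r (n ^ k)
  have hx1 : (n : ℚ) ^ k - 1 ∈ S r := by
    have : 1 ≤ n ^ k := Nat.one_le_pow _ _ (by omega)
    simpa [Nat.cast_sub this] using natCast_mem_S r (n ^ k - 1)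
  have hz : IsMFactorization r ((n : ℚ) ^ k) (Multiset.replicate (d ^ k) (r ^ k)) := by
    refine ⟨fun a ha => Multiset.eq_of_mem_replicate ha ▸ isAtomS_pow h0 hr hcop hn hd k, ?_⟩
    rw [Multiset.sum_replicate, nsmul_eq_mul, Nat.cast_pow, ← mul_pow, mul_comm, hr]
  obtain ⟨z, hz', h1, hdist⟩ := h _ hx hx1 _ hz
  exact ⟨z, hz', h1, mdist_replicate_le hdist⟩

lemma le_card_filter_of_sum_map_pow_eq (hr : r * d = n) (hcop : n.Coprime d) (hd : 0 < d)
    (hdn : d < n) {E : Multiset ℕ} {k : ℕ} (hE0 : 0 ∈ E)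
    (hsum : (E.map (r ^ ·)).sum = (n : ℚ) ^ (k + 1)) :
    k + 1 ≤ Multiset.card (E.filter (· ≤ k)) := by
  set F := E.filter (· ≤ k)
  set M := k + E.sum
  have hM : ∀ e ∈ E, e ≤ M := fun e he => (Multiset.le_sum_of_mem he).trans (by omega)
  have hclear : (E.map fun e => n ^ e * d ^ (M - e)).sum = n ^ (k + 1) * d ^ M := by
    refine Nat.cast_injective (R := ℚ) ((sum_map_pow_mul_pow hr hM).symm.trans ?_)
    rw [hsum]
    push_cast
    ring
  have hlow : (F.map fun e => n ^ e * d ^ (M - e)).sum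
      = d ^ (M - k) * (F.map fun e => n ^ e * d ^ (k - e)).sum := by
    rw [← Multiset.sum_map_mul_left]
    refine congrArg Multiset.sum (Multiset.map_congr rfl fun e he => ?_)
    have : e ≤ k := (Multiset.mem_filter.1 he).2
    rw [show M - e = (M - k) + (k - e) by omega, pow_add]
    ring
  have hhigh : n ^ (k + 1) ∣ ((E.filter (¬ · ≤ k)).map fun e => n ^ e * d ^ (M - e)).sum :=
    Multiset.dvd_sum fun x hx => by
      obtain ⟨e, he, rfl⟩ := Multiset.mem_map.1 hx
      exact (pow_dvd_pow n (not_le.1 (Multiset.mem_filter.1 he).2)).mul_right _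
  rw [← Multiset.filter_add_not (· ≤ k) E, Multiset.map_add, Multiset.sum_add, hlow] at hclear
  have hdvd : n ^ (k + 1) ∣ (F.map fun e => n ^ e * d ^ (k - e)).sum :=
    (Nat.Coprime.pow _ _ hcop).dvd_of_dvd_mul_left
      ((Nat.dvd_add_left hhigh).1 (hclear ▸ dvd_mul_right _ _))
  have hF : ∀ e ∈ F, e < k + 1 := fun e he => Nat.lt_succ_of_le (Multiset.mem_filter.1 he).2
  rw [Multiset.sum_map_eq_sum_range_count hF] at hdvd
  have hcard := Multiset.sum_map_eq_sum_range_count hF fun _ => 1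
  simp only [Multiset.map_const', Multiset.sum_replicate, smul_eq_mul, mul_one] at hcard
  rw [hcard]
  exact add_one_le_sum_range_of_dvd hd hdn hcop k (F.count ·)
    (Multiset.one_le_count_iff_mem.2 (Multiset.mem_filter.2 ⟨hE0, Nat.zero_le k⟩))
    (by simpa only [smul_eq_mul, mul_assoc] using hdvd)

lemma count_add_le_card_of_sum_eq (h0 : 0 < r) (hr : r * d = n) (hcop : n.Coprime d)
    (hn : 1 < n) (hd : 0 < d) (hdn : d < n) {z : Multiset ℚ} (hz : ∀ a ∈ z, IsAtomS r a)
    (h1 : 1 ∈ z) {k : ℕ} (hsum : z.sum = (n : ℚ) ^ (k + 1)) :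
    z.count (r ^ (k + 1)) + (k + 1) ≤ Multiset.card z := by
  obtain ⟨E, rfl⟩ := exists_map_pow_eq h0 hz
  have hinj := pow_right_injective₀ h0 (ne_one_of_mul_eq hr hcop hn)
  rw [Multiset.count_map_eq_count' _ _ hinj, Multiset.card_map]
  have hE0 : 0 ∈ E := by
    obtain ⟨e, he, he1⟩ := Multiset.mem_map.1 h1
    rwa [← hinj (he1.trans (pow_zero r).symm)]
  have hlow := le_card_filter_of_sum_map_pow_eq hr hcop hd hdn hE0 hsum
  have hhigh : E.count (k + 1) ≤ Multiset.card (E.filter (¬ · ≤ k)) :=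
    (Multiset.count_filter_of_pos (p := (¬ · ≤ k)) (by omega)).symm.trans_le
      (Multiset.count_le_card _ _)
  have := congrArg Multiset.card (Multiset.filter_add_not (· ≤ k) E)
  rw [Multiset.card_add] at this
  omega

lemma not_tameBound_one (h0 : 0 < r) (hr : r * d = n) (hcop : n.Coprime d) (hn : 1 < n)
    (hd : 1 < d) (N : ℕ) : ¬ TameBound r 1 N := by
  intro h
  rcases (ne_one_of_mul_eq hr hcop hn).lt_or_gt with hr1 | hr1
  · obtain ⟨k, hk⟩ := exists_succ_mul_pow_lt_one hr1 N
    obtain ⟨z, hz, h1, hcount, -⟩ := h.exists_near_replicate h0 hr hcop hn hd k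
    have hrk : (0 : ℚ) < r ^ k := pow_pos h0 k
    have hle := count_nsmul_add_le_sum (fun x hx => nonneg_of_mem_S h0 (hz.1 x hx).1) h1
      (b := r ^ k) (fun h => by nlinarith)
    rw [hz.2, nsmul_eq_mul] at hle
    have hcount' : (d : ℚ) ^ k * r ^ k ≤ (z.count (r ^ k) + N) * r ^ k :=
      mul_le_mul_of_nonneg_right (by exact_mod_cast hcount) hrk.le
    rw [← mul_pow, mul_comm, hr] at hcount'
    nlinarith
  · obtain ⟨z, hz, h1, -, hcard⟩ := h.exists_near_replicate h0 hr hcop hn hd (N + 1)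
    have hdn : d < n := by
      have : (d : ℚ) < n := by
        rw [← hr]
        nlinarith [(Nat.cast_lt (α := ℚ)).2 (by omega : 0 < d)]
      exact_mod_cast this
    have := count_add_le_card_of_sum_eq h0 hr hcop hn (by omega) hdn hz.1 h1 hz.2
    omega

end NonNatural

lemma exists_coprime_of_not_natCast {r : ℚ} (h0 : 0 < r) (hat : r = 1 ∨ 1 < r.num)
    (hnat : ¬ ∃ m : ℕ, r = m) : ∃ n d : ℕ, 1 < n ∧ 1 < d ∧ n.Coprime d ∧ r * d = n := by
  have hnum : 0 < r.num := Rat.num_pos.2 h0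
  refine ⟨r.num.natAbs, r.den, ?_, ?_, r.reduced, ?_⟩
  · have := hat.resolve_left fun h => hnat ⟨1, by simp [h]⟩
    omega
  · refine lt_of_le_of_ne r.den_pos fun h => hnat ⟨r.num.natAbs, ?_⟩
    rw [Nat.cast_natAbs, abs_of_pos hnum]
    exact (Rat.coe_int_num_of_den_eq_one h.symm).symm
  · rw [Nat.cast_natAbs, abs_of_pos hnum]
    exact_mod_cast Rat.mul_den_eq_num r

theorem stmt19 (r : ℚ) (h0 : 0 < r) (hat : r = 1 ∨ 1 < r.num) :
    List.TFAE [
      (∃ m : ℕ, r = m),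
      (⨆ a ∈ {a : ℚ | IsAtomS r a}, omegaS r a) < ⊤,
      (⨆ a ∈ {a : ℚ | IsAtomS r a}, tameS r a) < ⊤,
      ∀ a : ℚ, IsAtomS r a → tameS r a < ⊤ ] := by
  tfae_have 1 → 2 := by
    rintro ⟨m, rfl⟩
    refine (iSup₂_le fun a (ha : IsAtomS _ a) => ?_).trans_lt (ENat.natCast_lt_top 1)
    exact ha.eq_one_of_natCast ▸ omegaS_one_natCast_le_one
  tfae_have 1 → 3 := by
    rintro ⟨m, rfl⟩
    refine (iSup₂_le fun a (ha : IsAtomS _ a) => ?_).trans_lt (ENat.natCast_lt_top 0)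
    exact (ha.eq_one_of_natCast ▸ tameS_one_natCast_eq_zero).le
  tfae_have 3 → 4 := fun h a ha => (le_iSup₂ (f := fun a _ => tameS r a) a ha).trans_lt h
  tfae_have 2 → 1 := by
    intro h
    by_contra hnat
    obtain ⟨n, d, hn, hd, hcop, hr⟩ := exists_coprime_of_not_natCast h0 hat hnat
    obtain ⟨a, ha, hna⟩ :=
      exists_not_omegaBound h0 hr hcop hn hd (⨆ a ∈ {a : ℚ | IsAtomS r a}, omegaS r a).toNat
    obtain ⟨m, hm, hbound⟩ := exists_le_of_sInf_le
      ((le_iSup₂ (f := fun a _ => omegaS r a) a ha).trans (ENat.natCast_toNat h.ne).ge)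
    exact hna (hbound.mono hm)
  tfae_have 4 → 1 := by
    intro h
    by_contra hnat
    obtain ⟨n, d, hn, hd, hcop, hr⟩ := exists_coprime_of_not_natCast h0 hat hnat
    have h1 := h 1 (by simpa using isAtomS_pow h0 hr hcop hn hd 0)
    obtain ⟨m, -, hbound⟩ := exists_le_of_sInf_le (ENat.natCast_toNat h1.ne).ge
    exact not_tameBound_one h0 hr hcop hn hd m hbound
  tfae_finish
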